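/- arXiv:1811.01456 — 6 statements merged into one kernel-verified Lean document; each statement's English description precedes it below -/
import Mathlib

section
/- For uniformities 𝒰 and 𝒱 on a set S, the join 𝒰 ∨ 𝒱 in the lattice of uniformities equals the filter 𝒰 ∘ 𝒱 if and only if 𝒰 and 𝒱 permute, i.e., 𝒰 ∘ 𝒱 = 𝒱 ∘ 𝒰. -/
/-! `𝒰 ∘ 𝒱` lies below every uniformity above `𝒰` and `𝒱`, so the join equals `𝒰 ∘ 𝒱` exactly
when `𝒰 ∘ 𝒱` is itself a uniformity. Inversion of relations turns `𝒰 ∘ 𝒱` into `𝒱 ∘ 𝒰` and fixes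
the join, which forces permutability. Conversely, if `𝒰` and `𝒱` permute then `𝒰 ∘ 𝒱` is symmetric,
and by associativity
`(𝒰 ∘ 𝒱) ∘ (𝒰 ∘ 𝒱) = 𝒰 ∘ (𝒱 ∘ 𝒰) ∘ 𝒱 = 𝒰 ∘ (𝒰 ∘ 𝒱) ∘ 𝒱 = (𝒰 ∘ 𝒰) ∘ (𝒱 ∘ 𝒱) ≤ 𝒰 ∘ 𝒱`. -/

open Filter Set

variable {α : Type*}

/-- A uniformity on a set. -/
def IsUniformity (𝒰 : Filter (α × α)) : Prop :=
  (∀ U ∈ 𝒰, SetRel.id ⊆ U) ∧ (∀ U ∈ 𝒰, Prod.swap ⁻¹' U ∈ 𝒰) ∧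
    (∀ U ∈ 𝒰, ∃ V ∈ 𝒰, SetRel.comp V V ⊆ U)

/-- Composition of filters of relations. -/
def fComp (F G : Filter (α × α)) : Filter (α × α) :=
  F.lift fun U => G.lift' fun V => SetRel.comp U V

/-- The join of two uniformities in the complete lattice of uniformities:
the least uniformity above both (the meet of all uniformities above both). -/
def uJoin (𝒰 𝒱 : Filter (α × α)) : Filter (α × α) :=
  sInf {𝒲 | IsUniformity 𝒲 ∧ 𝒰 ≤ 𝒲 ∧ 𝒱 ≤ 𝒲}

open scoped SetRel

lemma mem_fComp {F G : Filter (α × α)} {W : Set (α × α)} :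
    W ∈ fComp F G ↔ ∃ U ∈ F, ∃ V ∈ G, U ○ V ⊆ W := by
  have hmono : Monotone fun U : Set (α × α) => G.lift' fun V => U ○ V :=
    fun _ _ hUU' => lift'_mono le_rfl fun _ => SetRel.comp_subset_comp_left hUU'
  rw [fComp, mem_lift_sets hmono]
  exact exists_congr fun U => and_congr_right fun _ =>
    mem_lift'_sets (monotone_const.relComp monotone_id)

lemma fComp_mono {F₁ F₂ G₁ G₂ : Filter (α × α)} (hF : F₁ ≤ F₂) (hG : G₁ ≤ G₂) :
    fComp F₁ G₁ ≤ fComp F₂ G₂ :=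
  lift_mono hF fun _ => lift'_mono hG le_rfl

lemma fComp_assoc (F G H : Filter (α × α)) : fComp (fComp F G) H = fComp F (fComp G H) := by
  ext W
  simp only [mem_fComp]
  constructor
  · rintro ⟨X, ⟨U, hU, V, hV, hUV⟩, Z, hZ, hXZ⟩
    refine ⟨U, hU, V ○ Z, ⟨V, hV, Z, hZ, subset_rfl⟩, ?_⟩
    rw [← SetRel.comp_assoc]
    exact (SetRel.comp_subset_comp_left hUV).trans hXZ
  · rintro ⟨U, hU, X, ⟨V, hV, Z, hZ, hVZ⟩, hUX⟩
    refine ⟨U ○ V, ⟨U, hU, V, hV, subset_rfl⟩, Z, hZ, ?_⟩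
    rw [SetRel.comp_assoc]
    exact (SetRel.comp_subset_comp_right hVZ).trans hUX

lemma map_swap_fComp (F G : Filter (α × α)) :
    map Prod.swap (fComp F G) = fComp (map Prod.swap G) (map Prod.swap F) := by
  ext W
  simp only [mem_map, mem_fComp]
  constructor
  · rintro ⟨U, hU, V, hV, hUV⟩
    refine ⟨SetRel.inv V, hV, SetRel.inv U, hU, ?_⟩
    rw [← SetRel.inv_comp]
    exact SetRel.inv_mono hUV
  · rintro ⟨V, hV, U, hU, hVU⟩
    refine ⟨SetRel.inv U, hU, SetRel.inv V, hV, ?_⟩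
    rw [← SetRel.inv_comp]
    exact SetRel.inv_mono hVU

lemma map_swap_eq_of_le {F : Filter (α × α)} (h : map Prod.swap F ≤ F) : map Prod.swap F = F := by
  refine h.antisymm ?_
  calc F = map Prod.swap (map Prod.swap F) := by rw [map_map, Prod.swap_swap_eq, map_id]
    _ ≤ map Prod.swap F := map_mono h

lemma isUniformity_iff {𝒲 : Filter (α × α)} :
    IsUniformity 𝒲 ↔ (∀ U ∈ 𝒲, SetRel.id ⊆ U) ∧ map Prod.swap 𝒲 ≤ 𝒲 ∧ fComp 𝒲 𝒲 ≤ 𝒲 := by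
  refine and_congr Iff.rfl (and_congr Iff.rfl ?_)
  simp only [le_def, mem_fComp]
  refine forall₂_congr fun U _ => ⟨?_, ?_⟩
  · rintro ⟨V, hV, hVV⟩
    exact ⟨V, hV, V, hV, hVV⟩
  · rintro ⟨V₁, hV₁, V₂, hV₂, hV₁₂⟩
    exact ⟨V₁ ∩ V₂, inter_mem hV₁ hV₂,
      (SetRel.comp_subset_comp inter_subset_left inter_subset_right).trans hV₁₂⟩

lemma IsUniformity.map_swap_eq {𝒲 : Filter (α × α)} (h : IsUniformity 𝒲) :
    map Prod.swap 𝒲 = 𝒲 :=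
  map_swap_eq_of_le (isUniformity_iff.1 h).2.1

lemma map_swap_uJoin (𝒰 𝒱 : Filter (α × α)) : map Prod.swap (uJoin 𝒰 𝒱) = uJoin 𝒰 𝒱 :=
  map_swap_eq_of_le <| le_sInf fun _ h𝒲 => (map_mono (sInf_le h𝒲)).trans_eq h𝒲.1.map_swap_eq

lemma le_fComp_left {G : Filter (α × α)} (hG : ∀ V ∈ G, SetRel.id ⊆ V) (F : Filter (α × α)) :
    F ≤ fComp F G := fun W hW => by
  obtain ⟨U, hU, V, hV, hUV⟩ := mem_fComp.1 hW
  have := SetRel.id_subset_iff.1 (hG V hV)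
  exact mem_of_superset hU (SetRel.left_subset_comp.trans hUV)

lemma le_fComp_right {F : Filter (α × α)} (hF : ∀ U ∈ F, SetRel.id ⊆ U) (G : Filter (α × α)) :
    G ≤ fComp F G := fun W hW => by
  obtain ⟨U, hU, V, hV, hUV⟩ := mem_fComp.1 hW
  have := SetRel.id_subset_iff.1 (hF U hU)
  exact mem_of_superset hV (SetRel.right_subset_comp.trans hUV)

lemma fComp_le {F G 𝒲 : Filter (α × α)} (h𝒲 : IsUniformity 𝒲) (hF : F ≤ 𝒲) (hG : G ≤ 𝒲) :
    fComp F G ≤ 𝒲 :=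
  (fComp_mono hF hG).trans (isUniformity_iff.1 h𝒲).2.2

lemma fComp_le_uJoin (𝒰 𝒱 : Filter (α × α)) : fComp 𝒰 𝒱 ≤ uJoin 𝒰 𝒱 :=
  le_sInf fun _ ⟨h𝒲, h𝒰, h𝒱⟩ => fComp_le h𝒲 h𝒰 h𝒱

lemma uJoin_le {𝒰 𝒱 𝒲 : Filter (α × α)} (h𝒲 : IsUniformity 𝒲) (h𝒰 : 𝒰 ≤ 𝒲) (h𝒱 : 𝒱 ≤ 𝒲) :
    uJoin 𝒰 𝒱 ≤ 𝒲 :=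
  sInf_le ⟨h𝒲, h𝒰, h𝒱⟩

lemma isUniformity_fComp_of_comm {𝒰 𝒱 : Filter (α × α)} (hU : IsUniformity 𝒰) (hV : IsUniformity 𝒱)
    (hcomm : fComp 𝒰 𝒱 = fComp 𝒱 𝒰) : IsUniformity (fComp 𝒰 𝒱) := by
  obtain ⟨hU_refl, -, hU_comp⟩ := isUniformity_iff.1 hU
  obtain ⟨hV_refl, -, hV_comp⟩ := isUniformity_iff.1 hV
  refine isUniformity_iff.2 ⟨fun W hW => ?_, ?_, ?_⟩
  · obtain ⟨U, hU, V, hV, hUV⟩ := mem_fComp.1 hW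
    calc SetRel.id = SetRel.id ○ SetRel.id := (SetRel.comp_id _).symm
      _ ⊆ U ○ V := SetRel.comp_subset_comp (hU_refl U hU) (hV_refl V hV)
      _ ⊆ W := hUV
  · rw [map_swap_fComp, hU.map_swap_eq, hV.map_swap_eq, hcomm]
  · calc fComp (fComp 𝒰 𝒱) (fComp 𝒰 𝒱) = fComp 𝒰 (fComp (fComp 𝒱 𝒰) 𝒱) := by
          simp only [fComp_assoc]
      _ = fComp (fComp 𝒰 𝒰) (fComp 𝒱 𝒱) := by rw [← hcomm]; simp only [fComp_assoc]
      _ ≤ fComp 𝒰 𝒱 := fComp_mono hU_comp hV_comp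

theorem stmt2 (𝒰 𝒱 : Filter (α × α)) (hU : IsUniformity 𝒰) (hV : IsUniformity 𝒱) :
    uJoin 𝒰 𝒱 = fComp 𝒰 𝒱 ↔ fComp 𝒰 𝒱 = fComp 𝒱 𝒰 := by
  constructor
  · intro hjoin
    calc fComp 𝒰 𝒱 = map Prod.swap (fComp 𝒰 𝒱) := by rw [← hjoin, map_swap_uJoin]
      _ = fComp 𝒱 𝒰 := by rw [map_swap_fComp, hU.map_swap_eq, hV.map_swap_eq]
  · intro hcomm
    refine (uJoin_le (isUniformity_fComp_of_comm hU hV hcomm) ?_ ?_).antisymm (fComp_le_uJoin 𝒰 𝒱)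
    · exact le_fComp_left hV.1 𝒰
    · exact le_fComp_right hU.1 𝒱
end

section
/- Let 𝒮 be a semiuniformity on a set S. Then the sets [Uₙ : n ∈ ℕ₊] = ⋃_{n≥1} ⋃_{γ ∈ Γₙ} U_{γ(1)} ∘ ⋯ ∘ U_{γ(n)}, where each Uₙ ∈ 𝒮 and Γₙ is the set of permutations of {1,…,n}, form a base for the smallest uniformity containing 𝒮 (i.e., contained in 𝒮 as a set of relations, under the reverse-inclusion ordering). -/
open Filter Set

variable {α : Type*}

/-- A semiuniformity: a filter of reflexive relations closed under inverses. -/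
def IsSemiUniformity (𝒮 : Filter (α × α)) : Prop :=
  (∀ U ∈ 𝒮, SetRel.id ⊆ U) ∧ (∀ U ∈ 𝒮, Prod.swap ⁻¹' U ∈ 𝒮)

/-- The uniformity generated by a filter of relations: the meet of all
uniformities above it (in the Mathlib filter order, which is the
reverse-inclusion order of the paper). -/
def Ug (𝒮 : Filter (α × α)) : Filter (α × α) :=
  sInf {𝒰 | IsUniformity 𝒰 ∧ 𝒮 ≤ 𝒰}

/-- `B` is a base for the filter `F`. -/
def IsBaseOf (B : Set (Set (α × α))) (F : Filter (α × α)) : Prop :=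
  B ⊆ F.sets ∧ ∀ U ∈ F, ∃ V ∈ B, V ⊆ U

/-- Composition of a nonempty list of relations (empty list gives the diagonal). -/
def listComp : List (Set (α × α)) → Set (α × α)
  | [] => SetRel.id
  | [R] => R
  | R :: S :: l => SetRel.comp R (listComp (S :: l))

/-- Weber's relation `[Uₙ : n ∈ ℕ₊]`: the union over `n` and over permutations
`γ` of `{0,…,n}` of the compositions `U_{γ 0} ∘ ⋯ ∘ U_{γ n}`. -/
def weber (U : ℕ → Set (α × α)) : Set (α × α) :=
  ⋃ n : ℕ, ⋃ γ : Equiv.Perm (Fin (n + 1)),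
    listComp (List.ofFn fun i : Fin (n + 1) => U ((γ i) : ℕ))

/-!
Reflexivity lets a composition along any list of distinct indices be padded to one along a
permutation, so `weber U` is the union of the compositions along all such lists. Reversing a list
gives symmetry, and interleaving two lists on the even and odd indices shows
`weber V ○ weber V ⊆ weber U` for `V n = U (2n) ∩ U (2n+1)`; hence these relations form a
uniformity above `𝒮`. Conversely, in a uniformity containing `𝒮` every entourage `s` starts a
sequence `W₀ = s`, `W (k+1)³ ⊆ W k`, and splitting a list of distinct indices at its least element
shows by induction that `weber (W ∘ succ) ⊆ s`.
-/

open scoped SetRel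

section listComp

lemma SetRel.subset_comp_of_id_subset (R : SetRel α α) {S : SetRel α α} (hS : SetRel.id ⊆ S) :
    R ⊆ R ○ S := by
  simpa using SetRel.comp_subset_comp_right (R := R) hS

lemma listComp_cons (R : Set (α × α)) (l : List (Set (α × α))) :
    listComp (R :: l) = R ○ listComp l := by
  cases l with
  | nil => simp [listComp]
  | cons S t => rfl

lemma listComp_append (l₁ l₂ : List (Set (α × α))) :
    listComp (l₁ ++ l₂) = listComp l₁ ○ listComp l₂ := by
  induction l₁ with
  | nil => simp [listComp]
  | cons R t ih => rw [List.cons_append, listComp_cons, ih, listComp_cons, SetRel.comp_assoc]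

lemma listComp_map_mono {ι : Type*} {U V : ι → Set (α × α)} (h : ∀ i, U i ⊆ V i) (l : List ι) :
    listComp (l.map U) ⊆ listComp (l.map V) := by
  induction l with
  | nil => exact subset_rfl
  | cons i t ih =>
    rw [List.map_cons, List.map_cons, listComp_cons, listComp_cons]
    exact SetRel.comp_subset_comp (h i) ih

lemma listComp_mono_of_sublist {l l' : List (Set (α × α))} (h : l.Sublist l')
    (href : ∀ R ∈ l', SetRel.id ⊆ R) : listComp l ⊆ listComp l' := by
  induction h with
  | slnil => exact subset_rfl
  | cons R _ ih =>
    rw [listComp_cons]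
    exact (ih fun S hS => href S (.tail _ hS)).trans <|
      (SetRel.id_comp _).symm.subset.trans <| SetRel.comp_subset_comp_left (href R (.head _))
  | cons_cons R _ ih =>
    rw [listComp_cons, listComp_cons]
    exact SetRel.comp_subset_comp_right (ih fun S hS => href S (.tail _ hS))

lemma inv_listComp (l : List (Set (α × α))) :
    SetRel.inv (listComp l) = listComp (l.reverse.map SetRel.inv) := by
  induction l with
  | nil => exact SetRel.inv_id
  | cons R t ih =>
    rw [listComp_cons, SetRel.inv_comp, ih, List.reverse_cons, List.map_append, listComp_append]
    simp [listComp]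

end listComp

section weber

lemma ofFn_perm_map (U : ℕ → Set (α × α)) {n : ℕ} (γ : Equiv.Perm (Fin (n + 1))) :
    List.ofFn (fun i => U (γ i : ℕ)) = (List.ofFn fun i => (γ i : ℕ)).map U := by
  rw [List.map_ofFn]; rfl

lemma nodup_ofFn_perm {n : ℕ} (γ : Equiv.Perm (Fin (n + 1))) :
    (List.ofFn fun i => (γ i : ℕ)).Nodup :=
  List.nodup_ofFn.mpr (Fin.val_injective.comp γ.injective)

lemma exists_perm_ofFn_eq {n : ℕ} {l : List ℕ} (hl : l.Perm (List.range (n + 1))) :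
    ∃ γ : Equiv.Perm (Fin (n + 1)), List.ofFn (fun i => (γ i : ℕ)) = l := by
  have hlen : l.length = n + 1 := by simpa using hl.length_eq
  have hlt (i : ℕ) (hi : i < l.length) : l[i] < n + 1 :=
    List.mem_range.mp (hl.subset (List.getElem_mem hi))
  let f : Fin (n + 1) → Fin (n + 1) := fun i => ⟨l[(i : ℕ)], hlt i (by omega)⟩
  have hf : f.Injective := fun i j hij => Fin.ext <|
    (List.Nodup.getElem_inj_iff (hl.nodup_iff.mpr List.nodup_range)).mp (congrArg Fin.val hij)
  refine ⟨Equiv.ofBijective f (Finite.injective_iff_bijective.mp hf), ?_⟩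
  exact List.ext_getElem (by simpa using hlen.symm) fun i _ _ => by rw [List.getElem_ofFn]; rfl

lemma weber_mono {U V : ℕ → Set (α × α)} (h : ∀ n, U n ⊆ V n) : weber U ⊆ weber V :=
  iUnion₂_mono fun n γ => by
    rw [ofFn_perm_map, ofFn_perm_map]
    exact listComp_map_mono h _

lemma apply_zero_subset_weber (U : ℕ → Set (α × α)) : U 0 ⊆ weber U :=
  subset_iUnion₂_of_subset 0 1 (by simp [listComp])

lemma exists_nodup_of_mem_weber {U : ℕ → Set (α × α)} {p : α × α} (hp : p ∈ weber U) :
    ∃ l : List ℕ, l.Nodup ∧ p ∈ listComp (l.map U) := by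
  obtain ⟨n, γ, hp⟩ := mem_iUnion₂.mp hp
  exact ⟨_, nodup_ofFn_perm γ, ofFn_perm_map U γ ▸ hp⟩

/-- Extend `l` by the missing indices below a bound to a permutation of an initial segment of `ℕ`;
reflexivity of the `U n` lets the extra factors be dropped. -/
lemma listComp_map_subset_weber {U : ℕ → Set (α × α)} (href : ∀ n, SetRel.id ⊆ U n)
    {l : List ℕ} (hl : l.Nodup) : listComp (l.map U) ⊆ weber U := by
  classical
  obtain ⟨n, hn⟩ : ∃ n, ∀ x ∈ l, x < n + 1 :=
    ⟨l.sum, fun x hx => Nat.lt_succ_of_le (List.le_sum_of_mem hx)⟩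
  set l' := l ++ (List.range (n + 1)).filter (· ∉ l)
  have hl' : l'.Perm (List.range (n + 1)) := by
    refine (List.perm_ext_iff_of_nodup ?_ List.nodup_range).mpr fun x => ?_
    · exact hl.append (List.nodup_range.filter _) fun x hx hx' => by simp_all
    · by_cases x ∈ l <;> simp_all [l']
  obtain ⟨γ, hγ⟩ := exists_perm_ofFn_eq hl'
  calc listComp (l.map U)
      ⊆ listComp (l'.map U) :=
        listComp_mono_of_sublist ((List.sublist_append_left _ _).map U)
          (by simpa using fun n _ => href n)
    _ = listComp (List.ofFn fun i => U (γ i : ℕ)) := by rw [ofFn_perm_map, hγ]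
    _ ⊆ weber U := subset_iUnion₂_of_subset n γ subset_rfl

lemma weber_inv_subset {U : ℕ → Set (α × α)} (href : ∀ n, SetRel.id ⊆ U n) :
    weber (fun n => SetRel.inv (U n)) ⊆ SetRel.inv (weber U) := by
  intro p hp
  obtain ⟨l, hl, hp⟩ := exists_nodup_of_mem_weber hp
  have : listComp (l.map fun n => SetRel.inv (U n)) = SetRel.inv (listComp (l.reverse.map U)) := by
    simp only [inv_listComp, List.map_reverse, List.reverse_reverse, List.map_map]; rfl
  exact SetRel.inv_mono (listComp_map_subset_weber href (List.nodup_reverse.mpr hl)) (this ▸ hp)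

/-- The two factors use the even and the odd members of `U`, so their concatenation is again
a composition along distinct indices. -/
lemma weber_comp_weber_subset {U : ℕ → Set (α × α)} (href : ∀ n, SetRel.id ⊆ U n) :
    weber (fun n => U (2 * n) ∩ U (2 * n + 1)) ○ weber (fun n => U (2 * n) ∩ U (2 * n + 1)) ⊆
      weber U := by
  rintro ⟨a, c⟩ ⟨b, hab, hbc⟩
  obtain ⟨l₁, hl₁, hab⟩ := exists_nodup_of_mem_weber hab
  obtain ⟨l₂, hl₂, hbc⟩ := exists_nodup_of_mem_weber hbc
  have hnodup : (l₁.map (2 * ·) ++ l₂.map (2 * · + 1)).Nodup := by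
    refine (hl₁.map fun _ _ h => by omega).append (hl₂.map fun _ _ h => by omega) ?_
    intro z hz₁ hz₂
    obtain ⟨x, -, rfl⟩ := List.mem_map.mp hz₁
    obtain ⟨y, -, h⟩ := List.mem_map.mp hz₂
    omega
  refine listComp_map_subset_weber href hnodup ?_
  rw [List.map_append, List.map_map, List.map_map, listComp_append]
  exact ⟨b, listComp_map_mono (fun _ => inter_subset_left) l₁ hab,
    listComp_map_mono (fun _ => inter_subset_right) l₂ hbc⟩

end weber

lemma List.exists_eq_append_cons_lt_of_nodup {β : Type*} [LinearOrder β] {l : List β}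
    (hl : l.Nodup) (hne : l ≠ []) : ∃ a n b, l = a ++ n :: b ∧ ∀ x ∈ a ++ b, n < x := by
  obtain ⟨a, b, hab⟩ := List.append_of_mem (List.min_mem hne)
  refine ⟨a, l.min hne, b, hab, fun x hx => lt_of_le_of_ne ?_ ?_⟩
  · refine List.min_le_of_mem ?_
    rw [hab]
    simp only [List.mem_append, List.mem_cons] at hx ⊢
    tauto
  · rintro rfl
    rw [hab, List.nodup_middle, List.nodup_cons] at hl
    exact hl.1 hx

section chain

variable {W : ℕ → Set (α × α)} (href : ∀ k, SetRel.id ⊆ W k)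
  (hW : ∀ k, W (k + 1) ○ (W (k + 1) ○ W (k + 1)) ⊆ W k)
include href hW

lemma antitone_of_comp_comp_subset : Antitone W :=
  antitone_nat_of_succ_le fun k =>
    calc W (k + 1) ⊆ W (k + 1) ○ W (k + 1) := SetRel.subset_comp_of_id_subset _ (href _)
      _ ⊆ W (k + 1) ○ (W (k + 1) ○ W (k + 1)) :=
        SetRel.comp_subset_comp_right (SetRel.subset_comp_of_id_subset _ (href _))
      _ ⊆ W k := hW k

/-- Splitting a list of distinct indices at its least element `n` leaves two shorter lists of
indices above `n`, each composing into `W n`; and `W n ○ W n ○ W n ⊆ W (n - 1)`. -/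
lemma listComp_map_subset_of_comp_comp_subset {l : List ℕ} (hl : l.Nodup) {m : ℕ}
    (hm : ∀ x ∈ l, m < x) : listComp (l.map W) ⊆ W m := by
  rcases eq_or_ne l [] with rfl | hne
  · exact href m
  obtain ⟨a, n, b, rfl, hn⟩ := List.exists_eq_append_cons_lt_of_nodup hl hne
  rw [List.nodup_middle, List.nodup_cons, List.nodup_append] at hl
  have ha : listComp (a.map W) ⊆ W n :=
    listComp_map_subset_of_comp_comp_subset hl.2.1 fun x hx => hn x (List.mem_append_left b hx)
  have hb : listComp (b.map W) ⊆ W n :=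
    listComp_map_subset_of_comp_comp_subset hl.2.2.1 fun x hx => hn x (List.mem_append_right a hx)
  obtain ⟨k, rfl⟩ : ∃ k, n = k + 1 := Nat.exists_eq_add_one.mpr (Nat.zero_lt_of_lt (hm n (by simp)))
  rw [List.map_append, List.map_cons, listComp_append, listComp_cons]
  calc listComp (a.map W) ○ (W (k + 1) ○ listComp (b.map W))
      ⊆ W (k + 1) ○ (W (k + 1) ○ W (k + 1)) :=
        SetRel.comp_subset_comp ha (SetRel.comp_subset_comp_right hb)
    _ ⊆ W k := hW k
    _ ⊆ W m := antitone_of_comp_comp_subset href hW (Nat.le_of_lt_succ (hm _ (by simp)))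
termination_by l.length
decreasing_by all_goals subst_vars; simp only [List.length_append, List.length_cons]; omega

lemma weber_succ_subset_of_comp_comp_subset : weber (fun n => W (n + 1)) ⊆ W 0 := by
  intro p hp
  obtain ⟨l, hl, hp⟩ := exists_nodup_of_mem_weber hp
  refine listComp_map_subset_of_comp_comp_subset href hW (l := l.map (· + 1))
    (hl.map fun _ _ => Nat.succ.inj) (by simp) ?_
  rwa [List.map_map]

end chain

namespace IsUniformity

variable {𝒰 : Filter (α × α)} (h𝒰 : IsUniformity 𝒰)
include h𝒰

lemma exists_comp_comp_subset {V : Set (α × α)} (hV : V ∈ 𝒰) :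
    ∃ W ∈ 𝒰, W ○ (W ○ W) ⊆ V := by
  obtain ⟨W₁, hW₁, hW₁V⟩ := h𝒰.2.2 V hV
  obtain ⟨W, hW, hWW₁⟩ := h𝒰.2.2 W₁ hW₁
  have hWsub : W ⊆ W₁ := (SetRel.subset_comp_of_id_subset W (h𝒰.1 W hW)).trans hWW₁
  exact ⟨W, hW, (SetRel.comp_subset_comp hWsub hWW₁).trans hW₁V⟩

lemma exists_weber_subset {s : Set (α × α)} (hs : s ∈ 𝒰) :
    ∃ U : ℕ → Set (α × α), (∀ n, U n ∈ 𝒰) ∧ weber U ⊆ s := by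
  choose! next hnext_mem hnext using fun V (hV : V ∈ 𝒰) => h𝒰.exists_comp_comp_subset hV
  let W : ℕ → Set (α × α) := fun n => next^[n] s
  have hW_mem (n : ℕ) : W n ∈ 𝒰 := by
    induction n with
    | zero => exact hs
    | succ n ih =>
      rw [show W (n + 1) = next (W n) from Function.iterate_succ_apply' next n s]
      exact hnext_mem _ ih
  refine ⟨fun n => W (n + 1), fun n => hW_mem _, ?_⟩
  refine weber_succ_subset_of_comp_comp_subset (fun k => h𝒰.1 _ (hW_mem k)) fun k => ?_
  simp only [W, Function.iterate_succ_apply']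
  exact hnext _ (hW_mem k)

end IsUniformity

def weberFilter (𝒮 : Filter (α × α)) : Filter (α × α) where
  sets := {s | ∃ U : ℕ → Set (α × α), (∀ n, U n ∈ 𝒮) ∧ weber U ⊆ s}
  univ_sets := ⟨fun _ => univ, fun _ => univ_mem, subset_univ _⟩
  sets_of_superset := fun ⟨U, hU, hUs⟩ hst => ⟨U, hU, hUs.trans hst⟩
  inter_sets := fun ⟨U, hU, hUs⟩ ⟨V, hV, hVt⟩ =>
    ⟨fun n => U n ∩ V n, fun n => inter_mem (hU n) (hV n),
      subset_inter ((weber_mono fun _ => inter_subset_left).trans hUs)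
        ((weber_mono fun _ => inter_subset_right).trans hVt)⟩

lemma mem_weberFilter {𝒮 : Filter (α × α)} {s : Set (α × α)} :
    s ∈ weberFilter 𝒮 ↔ ∃ U : ℕ → Set (α × α), (∀ n, U n ∈ 𝒮) ∧ weber U ⊆ s :=
  Iff.rfl

lemma le_weberFilter (𝒮 : Filter (α × α)) : 𝒮 ≤ weberFilter 𝒮 :=
  fun _ ⟨U, hU, hUs⟩ => mem_of_superset (hU 0) ((apply_zero_subset_weber U).trans hUs)

lemma IsUniformity.weberFilter_le {𝒮 𝒰 : Filter (α × α)} (h𝒰 : IsUniformity 𝒰) (h𝒮𝒰 : 𝒮 ≤ 𝒰) :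
    weberFilter 𝒮 ≤ 𝒰 := fun _ hs =>
  let ⟨U, hU, hUs⟩ := h𝒰.exists_weber_subset hs
  ⟨U, fun n => h𝒮𝒰 (hU n), hUs⟩

lemma IsSemiUniformity.isUniformity_weberFilter {𝒮 : Filter (α × α)} (h𝒮 : IsSemiUniformity 𝒮) :
    IsUniformity (weberFilter 𝒮) := by
  have href {U : ℕ → Set (α × α)} (hU : ∀ n, U n ∈ 𝒮) (n : ℕ) : SetRel.id ⊆ U n := h𝒮.1 _ (hU n)
  refine ⟨fun _ ⟨U, hU, hUs⟩ => ?_, fun _ ⟨U, hU, hUs⟩ => ?_, fun _ ⟨U, hU, hUs⟩ => ?_⟩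
  · exact (href hU 0).trans ((apply_zero_subset_weber U).trans hUs)
  · exact ⟨fun n => SetRel.inv (U n), fun n => h𝒮.2 _ (hU n),
      (weber_inv_subset (href hU)).trans (SetRel.inv_mono hUs)⟩
  · exact ⟨_, ⟨fun n => U (2 * n) ∩ U (2 * n + 1), fun n => inter_mem (hU _) (hU _), subset_rfl⟩,
      (weber_comp_weber_subset (href hU)).trans hUs⟩

lemma IsSemiUniformity.ug_eq_weberFilter {𝒮 : Filter (α × α)} (h𝒮 : IsSemiUniformity 𝒮) :
    Ug 𝒮 = weberFilter 𝒮 :=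
  le_antisymm (sInf_le ⟨h𝒮.isUniformity_weberFilter, le_weberFilter 𝒮⟩)
    (le_sInf fun _ ⟨h𝒰, h𝒮𝒰⟩ => h𝒰.weberFilter_le h𝒮𝒰)

theorem stmt3 (𝒮 : Filter (α × α)) (h : IsSemiUniformity 𝒮) :
    IsBaseOf {W | ∃ U : ℕ → Set (α × α), (∀ n, U n ∈ 𝒮) ∧ W = weber U} (Ug 𝒮) := by
  rw [h.ug_eq_weberFilter]
  refine ⟨?_, fun s hs => ?_⟩
  · rintro _ ⟨U, hU, rfl⟩
    exact ⟨U, hU, subset_rfl⟩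
  · obtain ⟨U, hU, hUs⟩ := mem_weberFilter.mp hs
    exact ⟨weber U, ⟨U, hU, rfl⟩, hUs⟩
end

section
/- If A is an algebra and 𝒮 is a compatible semiuniformity on A, then the uniformity generated by 𝒮 is compatible with the operations of A. -/
open Filter Set

variable {α : Type*}

/-- A filter of relations on an algebra (a type `A` with operations `ops`
indexed by a signature) is compatible if for each member `U` and each basic
operation there is a member `V` whose componentwise image lies in `U`. -/
def FilterCompatible {A : Type*} {ι : Type*} (ar : ι → ℕ)
    (ops : ∀ i, (Fin (ar i) → A) → A) (𝒰 : Filter (A × A)) : Prop :=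
  ∀ U ∈ 𝒰, ∀ i, ∃ V ∈ 𝒰, ∀ x y : Fin (ar i) → A,
    (∀ k, (x k, y k) ∈ V) → (ops i x, ops i y) ∈ U

/-!
Compatibility of `𝒰` with an `n`-ary operation `ω` is uniform continuity of `ω` on `Aⁿ`. Since
`Ug 𝒮` is the least uniformity above `𝒮`, it suffices to exhibit, for each coordinate `k`, a
uniformity above `𝒮` whose members are the relations
`{(a, b) | ∀ z, (ω (z[k ↦ a]), ω (z[k ↦ b])) ∈ U}` with `U ∈ Ug 𝒮`; compatibility of `𝒮` and
reflexivity of its members give exactly this. So `ω` is uniformly continuous in each variable,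
uniformly in the others, and changing the arguments one coordinate at a time makes it jointly
uniformly continuous.
-/

open scoped Uniformity

section Uniformity

variable {β : Type*}

lemma isUniformity_uniformity (u : UniformSpace α) : IsUniformity 𝓤[u] :=
  ⟨fun _ hU => refl_le_uniformity hU, fun _ hU => symm_le_uniformity hU,
    fun _ hU => comp_mem_uniformity_sets hU⟩

abbrev IsUniformity.toUniformSpace {𝒰 : Filter (α × α)} (h : IsUniformity 𝒰) :
    UniformSpace α :=
  .ofCore (.mk' 𝒰 (fun U hU _ => h.1 U hU rfl) h.2.1 h.2.2)

lemma isUniformity_sInf {X : Set (Filter (α × α))} (hX : ∀ 𝒰 ∈ X, IsUniformity 𝒰) :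
    IsUniformity (sInf X) := by
  have : sInf X = 𝓤[⨅ 𝒰 : X, (hX 𝒰 𝒰.2).toUniformSpace] := by
    rw [iInf_uniformity, sInf_eq_iInf']
    rfl
  exact this ▸ isUniformity_uniformity _

lemma isUniformity_Ug (𝒮 : Filter (α × α)) : IsUniformity (Ug 𝒮) :=
  isUniformity_sInf fun _ h => h.1

lemma le_Ug (𝒮 : Filter (α × α)) : 𝒮 ≤ Ug 𝒮 :=
  le_sInf fun _ h => h.2

lemma Ug_le {𝒮 𝒰 : Filter (α × α)} (h𝒰 : IsUniformity 𝒰) (h : 𝒮 ≤ 𝒰) : Ug 𝒮 ≤ 𝒰 :=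
  sInf_le ⟨h𝒰, h⟩

/-- The entourages of uniform equicontinuity of the family `φ`. -/
def equicontinuityRel {ζ : Type*} (φ : ζ → α → β) (U : Set (β × β)) : Set (α × α) :=
  {p | ∀ z, (φ z p.1, φ z p.2) ∈ U}

lemma monotone_equicontinuityRel {ζ : Type*} (φ : ζ → α → β) :
    Monotone (equicontinuityRel φ) :=
  fun _ _ hUV _ hp z => hUV (hp z)

lemma IsUniformity.lift'_equicontinuityRel {𝒱 : Filter (β × β)} (h𝒱 : IsUniformity 𝒱)
    {ζ : Type*} (φ : ζ → α → β) : IsUniformity (𝒱.lift' (equicontinuityRel φ)) := by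
  simp only [IsUniformity, Filter.mem_lift'_sets (monotone_equicontinuityRel φ)]
  refine ⟨?_, ?_, ?_⟩
  · rintro R ⟨U, hU, hUR⟩ ⟨a, b⟩ (rfl : a = b)
    exact hUR fun z => h𝒱.1 U hU rfl
  · rintro R ⟨U, hU, hUR⟩
    exact ⟨_, h𝒱.2.1 U hU, fun p hp => hUR hp⟩
  · rintro R ⟨U, hU, hUR⟩
    obtain ⟨V, hV, hVU⟩ := h𝒱.2.2 U hU
    refine ⟨_, ⟨V, hV, subset_rfl⟩, ?_⟩
    rintro ⟨a, c⟩ ⟨b, hab, hbc⟩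
    exact hUR fun z => hVU ⟨φ z b, hab z, hbc z⟩

end Uniformity

section Update

open Function

variable {ι β : Type*} [DecidableEq ι]

lemma exists_forall_mem_of_mem_equicontinuityRel_update [Finite ι]
    {𝒰 : Filter (α × α)} {𝒱 : Filter (β × β)} (h𝒱 : IsUniformity 𝒱) (f : (ι → α) → β)
    (hf : ∀ k, ∀ U ∈ 𝒱, equicontinuityRel (fun z a => f (update z k a)) U ∈ 𝒰) :
    ∀ U ∈ 𝒱, ∃ V ∈ 𝒰, ∀ x y : ι → α, (∀ k, (x k, y k) ∈ V) → (f x, f y) ∈ U := by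
  have := Fintype.ofFinite ι
  suffices h : ∀ s : Finset ι, ∀ U ∈ 𝒱, ∃ V ∈ 𝒰, ∀ x y : ι → α,
      (∀ k ∈ s, (x k, y k) ∈ V) → (∀ k ∉ s, x k = y k) → (f x, f y) ∈ U by
    intro U hU
    obtain ⟨V, hV, hxy⟩ := h Finset.univ U hU
    exact ⟨V, hV, fun x y h =>
      hxy x y (fun k _ => h k) (fun k hk => absurd (Finset.mem_univ k) hk)⟩
  intro s
  induction s using Finset.induction_on with
  | empty =>
    intro U hU
    refine ⟨Set.univ, Filter.univ_mem, fun x y _ hxy => ?_⟩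
    obtain rfl : x = y := funext fun k => hxy k (Finset.notMem_empty k)
    exact h𝒱.1 U hU rfl
  | insert j s hj ih =>
    intro U hU
    obtain ⟨W, hW, hWU⟩ := h𝒱.2.2 U hU
    obtain ⟨V, hV, hVW⟩ := ih W hW
    refine ⟨V ∩ equicontinuityRel (fun z a => f (update z j a)) W,
      Filter.inter_mem hV (hf j W hW), fun x y hxy hxy' => hWU ⟨f (update x j (y j)), ?_, ?_⟩⟩
    · simpa only [update_eq_self] using (hxy j (Finset.mem_insert_self j s)).2 x
    · refine hVW _ y (fun k hk => ?_) (fun k hk => ?_)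
      · rw [update_of_ne (ne_of_mem_of_not_mem hk hj)]
        exact (hxy k (Finset.mem_insert_of_mem hk)).1
      · rcases eq_or_ne k j with rfl | hkj
        · exact update_self ..
        · rw [update_of_ne hkj]
          exact hxy' k (by simp [hkj, hk])

lemma le_lift'_equicontinuityRel_update {𝒮 𝒰 : Filter (α × α)}
    (hrefl : ∀ V ∈ 𝒮, SetRel.id ⊆ V) (h𝒮𝒰 : 𝒮 ≤ 𝒰) (op : (ι → α) → α)
    (hop : ∀ U ∈ 𝒮, ∃ V ∈ 𝒮, ∀ x y : ι → α, (∀ k, (x k, y k) ∈ V) → (op x, op y) ∈ U)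
    (k : ι) : 𝒮 ≤ 𝒰.lift' (equicontinuityRel fun z a => op (update z k a)) := by
  intro R hR
  obtain ⟨U, hU, hUR⟩ := (Filter.mem_lift'_sets (monotone_equicontinuityRel _)).mp hR
  obtain ⟨V, hV, hVU⟩ := hop U (h𝒮𝒰 hU)
  refine Filter.mem_of_superset hV fun p hp => hUR fun z => hVU _ _ fun j => ?_
  rcases eq_or_ne j k with rfl | hjk
  · simpa only [update_self] using hp
  · simpa only [update_of_ne hjk] using hrefl V hV rfl

end Update

theorem stmt4 {A : Type*} {ι : Type*} (ar : ι → ℕ)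
    (ops : ∀ i, (Fin (ar i) → A) → A) (𝒮 : Filter (A × A))
    (hsemi : IsSemiUniformity 𝒮) (hcomp : FilterCompatible ar ops 𝒮) :
    FilterCompatible ar ops (Ug 𝒮) := by
  intro U hU i
  have hsep : ∀ k, ∀ U ∈ Ug 𝒮,
      equicontinuityRel (fun z a => ops i (Function.update z k a)) U ∈ Ug 𝒮 :=
    fun k U hU => Ug_le ((isUniformity_Ug 𝒮).lift'_equicontinuityRel _)
      (le_lift'_equicontinuityRel_update hsemi.1 (le_Ug 𝒮) (ops i) (fun U hU => hcomp U hU i) k)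
      (Filter.mem_lift' hU)
  exact exists_forall_mem_of_mem_equicontinuityRel_update (isUniformity_Ug 𝒮) (ops i) hsep U hU
end

section
/- Two superequivalences ℐ and ℐ' on a set S permute (ℐ ∘ ℐ' = ℐ' ∘ ℐ) if and only if their join in the lattice of superequivalences equals ℐ ∘ ℐ'. -/
open Set

variable {α : Type*}

/-- An ideal in the lattice of binary relations on a set: nonempty, downward
closed, and closed under finite unions (= finite joins). -/
def IsIdeal (ℐ : Set (Set (α × α))) : Prop :=
  ℐ.Nonempty ∧ (∀ R ∈ ℐ, ∀ T ⊆ R, T ∈ ℐ) ∧ (∀ R ∈ ℐ, ∀ S ∈ ℐ, R ∪ S ∈ ℐ)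

/-- A superequivalence: an ideal of relations containing the diagonal, closed
under relational opposites, and closed under composition of relations. -/
def IsSuperEq (ℐ : Set (Set (α × α))) : Prop :=
  IsIdeal ℐ ∧ SetRel.id ∈ ℐ ∧ (∀ R ∈ ℐ, Prod.swap ⁻¹' R ∈ ℐ) ∧
    (∀ R ∈ ℐ, ∀ S ∈ ℐ, SetRel.comp R S ∈ ℐ)

/-- Composition of ideals of relations: the ideal generated by the compositions
`R ○ S` of members (this generating family is directed, so the generated ideal
is its downward closure). -/
def idealComp (ℐ 𝒥 : Set (Set (α × α))) : Set (Set (α × α)) :=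
  {T | ∃ R ∈ ℐ, ∃ S ∈ 𝒥, T ⊆ SetRel.comp R S}

/-- The ideal of relations generated by a set `G` of relations: everything
below a finite union of members of `G`. -/
def idealGen (G : Set (Set (α × α))) : Set (Set (α × α)) :=
  {T | ∃ s : Finset (Set (α × α)), ↑s ⊆ G ∧ T ⊆ ⋃₀ ↑s}

/-- The set of finite (nonempty) compositions of relations from `X`. -/
def comps (X : Set (Set (α × α))) : Set (Set (α × α)) :=
  {T | ∃ l : List (Set (α × α)), l ≠ [] ∧ (∀ R ∈ l, R ∈ X) ∧ T = listComp l}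

/-- The join of two superequivalences: the ideal generated by all finite
compositions of relations from their union. -/
def seJoin (ℐ 𝒥 : Set (Set (α × α))) : Set (Set (α × α)) :=
  idealGen (comps (ℐ ∪ 𝒥))

/-- The join of a family of superequivalences. -/
def seSup (S : Set (Set (Set (α × α)))) : Set (Set (α × α)) :=
  idealGen (comps (⋃₀ S))

/-!
If `ℐ ∘ 𝒥 = 𝒥 ∘ ℐ`, then `ℐ ∘ 𝒥` is closed under composition (commute the middle factor of
`R ∘ S ∘ R' ∘ S'`) and contains `ℐ` and `𝒥`, so it contains every finite composition and is the
join. Conversely `𝒥 ∘ ℐ` always lies in the join; since taking opposites swaps `ℐ ∘ 𝒥` and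
`𝒥 ∘ ℐ`, the inclusion `𝒥 ∘ ℐ ⊆ ℐ ∘ 𝒥` already forces equality.
-/

section Composition

variable {ℐ 𝒥 : Set (Set (α × α))}

lemma subset_idealComp_left (h𝒥 : SetRel.id ∈ 𝒥) : ℐ ⊆ idealComp ℐ 𝒥 :=
  fun R hR => ⟨R, hR, _, h𝒥, (SetRel.comp_id R).superset⟩

lemma subset_idealComp_right (hℐ : SetRel.id ∈ ℐ) : 𝒥 ⊆ idealComp ℐ 𝒥 :=
  fun S hS => ⟨_, hℐ, S, hS, (SetRel.id_comp S).superset⟩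

lemma IsIdeal.idealComp (hℐ : IsIdeal ℐ) (h𝒥 : IsIdeal 𝒥) : IsIdeal (idealComp ℐ 𝒥) := by
  obtain ⟨⟨R, hR⟩, -, hℐunion⟩ := hℐ
  obtain ⟨⟨S, hS⟩, -, h𝒥union⟩ := h𝒥
  refine ⟨⟨_, R, hR, S, hS, Subset.rfl⟩, ?_, ?_⟩
  · rintro T ⟨R, hR, S, hS, hT⟩ T' hT'
    exact ⟨R, hR, S, hS, hT'.trans hT⟩
  · rintro T ⟨R, hR, S, hS, hT⟩ T' ⟨R', hR', S', hS', hT'⟩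
    refine ⟨R ∪ R', hℐunion R hR R' hR', S ∪ S', h𝒥union S hS S' hS', union_subset ?_ ?_⟩
    · exact hT.trans (SetRel.comp_subset_comp subset_union_left subset_union_left)
    · exact hT'.trans (SetRel.comp_subset_comp subset_union_right subset_union_right)

lemma comp_mem_idealComp_of_subset (hℐ : ∀ R ∈ ℐ, ∀ S ∈ ℐ, SetRel.comp R S ∈ ℐ)
    (h𝒥 : ∀ R ∈ 𝒥, ∀ S ∈ 𝒥, SetRel.comp R S ∈ 𝒥) (hperm : idealComp 𝒥 ℐ ⊆ idealComp ℐ 𝒥)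
    {T T' : Set (α × α)} (hT : T ∈ idealComp ℐ 𝒥) (hT' : T' ∈ idealComp ℐ 𝒥) :
    SetRel.comp T T' ∈ idealComp ℐ 𝒥 := by
  obtain ⟨R, hR, S, hS, hT⟩ := hT
  obtain ⟨R', hR', S', hS', hT'⟩ := hT'
  obtain ⟨R'', hR'', S'', hS'', hmid⟩ := hperm ⟨S, hS, R', hR', Subset.rfl⟩
  refine ⟨_, hℐ R hR R'' hR'', _, h𝒥 S'' hS'' S' hS', ?_⟩
  calc SetRel.comp T T'
      ⊆ SetRel.comp (SetRel.comp R S) (SetRel.comp R' S') := SetRel.comp_subset_comp hT hT'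
    _ = SetRel.comp R (SetRel.comp (SetRel.comp S R') S') := by simp only [SetRel.comp_assoc]
    _ ⊆ SetRel.comp R (SetRel.comp (SetRel.comp R'' S'') S') :=
        SetRel.comp_subset_comp Subset.rfl (SetRel.comp_subset_comp hmid Subset.rfl)
    _ = SetRel.comp (SetRel.comp R R'') (SetRel.comp S'' S') := by
        simp only [SetRel.comp_assoc]

lemma inv_mem_idealComp (hℐ : ∀ R ∈ ℐ, Prod.swap ⁻¹' R ∈ ℐ) (h𝒥 : ∀ R ∈ 𝒥, Prod.swap ⁻¹' R ∈ 𝒥)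
    {T : Set (α × α)} (hT : T ∈ idealComp ℐ 𝒥) : SetRel.inv T ∈ idealComp 𝒥 ℐ := by
  obtain ⟨R, hR, S, hS, hT⟩ := hT
  exact ⟨_, h𝒥 S hS, _, hℐ R hR, SetRel.inv_comp R S ▸ SetRel.inv_mono hT⟩

lemma idealComp_eq_of_subset (hℐ : ∀ R ∈ ℐ, Prod.swap ⁻¹' R ∈ ℐ)
    (h𝒥 : ∀ R ∈ 𝒥, Prod.swap ⁻¹' R ∈ 𝒥) (h : idealComp 𝒥 ℐ ⊆ idealComp ℐ 𝒥) :
    idealComp ℐ 𝒥 = idealComp 𝒥 ℐ :=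
  Subset.antisymm (fun _ hT => inv_mem_idealComp hℐ h𝒥 (h (inv_mem_idealComp hℐ h𝒥 hT))) h

end Composition

section Generation

variable {K X : Set (Set (α × α))}

lemma listComp_mem (hK : ∀ R ∈ K, ∀ S ∈ K, SetRel.comp R S ∈ K) {l : List (Set (α × α))}
    (hl : l ≠ []) (hlK : ∀ R ∈ l, R ∈ K) : listComp l ∈ K := by
  induction l using listComp.induct with
  | case1 => exact absurd rfl hl
  | case2 R => exact hlK R (List.mem_singleton_self R)
  | case3 R S l ih =>
    exact hK R (hlK R List.mem_cons_self) _
      (ih (List.cons_ne_nil S l) fun T hT => hlK T (List.mem_cons_of_mem R hT))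

lemma comps_subset (hK : ∀ R ∈ K, ∀ S ∈ K, SetRel.comp R S ∈ K) (hX : X ⊆ K) : comps X ⊆ K := by
  rintro _ ⟨l, hl, hlX, rfl⟩
  exact listComp_mem hK hl fun R hR => hX (hlX R hR)

lemma IsIdeal.sUnion_mem (hK : IsIdeal K) (s : Finset (Set (α × α))) (hs : ↑s ⊆ K) :
    ⋃₀ ↑s ∈ K := by
  classical
  obtain ⟨⟨R, hR⟩, hKdown, hKunion⟩ := hK
  induction s using Finset.induction_on with
  | empty => simpa using hKdown R hR ∅ (empty_subset R)
  | insert a t _ ih =>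
    rw [Finset.coe_insert, insert_subset_iff] at hs
    rw [Finset.coe_insert, sUnion_insert]
    exact hKunion a hs.1 _ (ih hs.2)

lemma IsIdeal.idealGen_subset {G : Set (Set (α × α))} (hK : IsIdeal K) (hG : G ⊆ K) :
    idealGen G ⊆ K :=
  fun T ⟨s, hs, hT⟩ => hK.2.1 _ (hK.sUnion_mem s (hs.trans hG)) T hT

lemma idealComp_subset_idealGen_comps {ℐ 𝒥 : Set (Set (α × α))} (hℐ : ℐ ⊆ X) (h𝒥 : 𝒥 ⊆ X) :
    idealComp ℐ 𝒥 ⊆ idealGen (comps X) := by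
  rintro T ⟨R, hR, S, hS, hT⟩
  refine ⟨{SetRel.comp R S}, ?_, by simpa using hT⟩
  rw [Finset.coe_singleton, singleton_subset_iff]
  refine ⟨[R, S], List.cons_ne_nil R [S], ?_, rfl⟩
  simp only [List.mem_cons, List.not_mem_nil, or_false]
  rintro _ (rfl | rfl)
  exacts [hℐ hR, h𝒥 hS]

end Generation

theorem stmt6 (ℐ 𝒥 : Set (Set (α × α))) (hI : IsSuperEq ℐ) (hJ : IsSuperEq 𝒥) :
    idealComp ℐ 𝒥 = idealComp 𝒥 ℐ ↔ seJoin ℐ 𝒥 = idealComp ℐ 𝒥 := by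
  obtain ⟨hℐideal, hℐid, hℐinv, hℐcomp⟩ := hI
  obtain ⟨h𝒥ideal, h𝒥id, h𝒥inv, h𝒥comp⟩ := hJ
  constructor
  · intro hperm
    refine Subset.antisymm ?_ (idealComp_subset_idealGen_comps subset_union_left subset_union_right)
    refine (hℐideal.idealComp h𝒥ideal).idealGen_subset (comps_subset ?_ ?_)
    · exact fun _ hT _ hT' => comp_mem_idealComp_of_subset hℐcomp h𝒥comp hperm.ge hT hT'
    · exact union_subset (subset_idealComp_left h𝒥id) (subset_idealComp_right hℐid)
  · intro hjoin
    refine idealComp_eq_of_subset hℐinv h𝒥inv ?_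
    exact hjoin ▸ idealComp_subset_idealGen_comps subset_union_right subset_union_left
end

section
/- For any set S, the lattice of superequivalences on S is an algebraic (compactly generated complete) lattice. -/
open Set

variable {α : Type*}

/-- The type of superequivalences on `α`, ordered by inclusion of ideals. -/
def SuperEqLat (α : Type*) := {ℐ : Set (Set (α × α)) // IsSuperEq ℐ}

namespace SuperEqLat

instance : PartialOrder (SuperEqLat α) :=
  inferInstanceAs (PartialOrder {ℐ : Set (Set (α × α)) // IsSuperEq ℐ})

theorem isSuperEq_inter (s : Set (SuperEqLat α)) :
    IsSuperEq {R : Set (α × α) | ∀ I ∈ s, R ∈ I.1} := by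
  refine ⟨⟨⟨∅, fun I hI => I.2.1.2.1 SetRel.id I.2.2.1 ∅ (Set.empty_subset _)⟩, ?_, ?_⟩,
    ?_, ?_, ?_⟩
  · intro R hR T hT I hI
    exact I.2.1.2.1 R (hR I hI) T hT
  · intro R hR T hT I hI
    exact I.2.1.2.2 R (hR I hI) T (hT I hI)
  · intro I hI
    exact I.2.2.1
  · intro R hR I hI
    exact I.2.2.2.1 R (hR I hI)
  · intro R hR T hT I hI
    exact I.2.2.2.2 R (hR I hI) T (hT I hI)

instance : InfSet (SuperEqLat α) :=
  ⟨fun s => ⟨{R : Set (α × α) | ∀ I ∈ s, R ∈ I.1}, isSuperEq_inter s⟩⟩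

/-- Superequivalences form a complete lattice (arbitrary meets are
intersections; joins are the least superequivalences above). -/
instance : CompleteLattice (SuperEqLat α) :=
  completeLatticeOfInf (SuperEqLat α) (by
    intro s
    constructor
    · intro I hI R hR
      exact hR I hI
    · intro b hb R hR I hI
      exact hb hI hR)

end SuperEqLat

/-! Each defining condition of a superequivalence involves only finitely many relations, so
directed unions of superequivalences are superequivalences and directed joins are unions.
Hence the superequivalence generated by a single relation is compact, and every
superequivalence is the join of those generated by its members. -/

namespace SuperEqLat

theorem isSuperEq_sUnion_of_directedOn {s : Set (SuperEqLat α)} (hne : s.Nonempty)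
    (hdir : DirectedOn (· ≤ ·) s) : IsSuperEq {R : Set (α × α) | ∃ I ∈ s, R ∈ I.1} := by
  obtain ⟨I₀, hI₀⟩ := hne
  refine ⟨⟨⟨SetRel.id, I₀, hI₀, I₀.2.2.1⟩, ?_, ?_⟩, ⟨I₀, hI₀, I₀.2.2.1⟩, ?_, ?_⟩
  · rintro R ⟨I, hI, hR⟩ T hT
    exact ⟨I, hI, I.2.1.2.1 R hR T hT⟩
  · rintro R ⟨I, hI, hR⟩ S ⟨J, hJ, hS⟩
    obtain ⟨K, hK, hIK, hJK⟩ := hdir I hI J hJ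
    exact ⟨K, hK, K.2.1.2.2 R (hIK hR) S (hJK hS)⟩
  · rintro R ⟨I, hI, hR⟩
    exact ⟨I, hI, I.2.2.2.1 R hR⟩
  · rintro R ⟨I, hI, hR⟩ S ⟨J, hJ, hS⟩
    obtain ⟨K, hK, hIK, hJK⟩ := hdir I hI J hJ
    exact ⟨K, hK, K.2.2.2.2 R (hIK hR) S (hJK hS)⟩

theorem coe_sSup_of_directedOn {s : Set (SuperEqLat α)} (hne : s.Nonempty)
    (hdir : DirectedOn (· ≤ ·) s) : (sSup s).1 = {R : Set (α × α) | ∃ I ∈ s, R ∈ I.1} := by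
  let U : SuperEqLat α := ⟨_, isSuperEq_sUnion_of_directedOn hne hdir⟩
  have hle : sSup s ≤ U := sSup_le fun I hI _ hR => ⟨I, hI, hR⟩
  have hge : U ≤ sSup s := fun _ ⟨_, hI, hR⟩ => le_sSup hI hR
  rw [le_antisymm hle hge]

def generate (R : Set (α × α)) : SuperEqLat α :=
  sInf {I : SuperEqLat α | R ∈ I.1}

theorem mem_generate (R : Set (α × α)) : R ∈ (generate R).1 :=
  fun _ hI => hI

theorem generate_le_iff {R : Set (α × α)} {I : SuperEqLat α} : generate R ≤ I ↔ R ∈ I.1 :=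
  ⟨fun h => h (mem_generate R), fun h => sInf_le h⟩

theorem isCompactElement_generate (R : Set (α × α)) : IsCompactElement (generate R) := by
  rw [CompleteLattice.isCompactElement_iff_le_of_directed_sSup_le]
  intro s hne hdir hle
  have hR : R ∈ (sSup s).1 := generate_le_iff.mp hle
  rw [coe_sSup_of_directedOn hne hdir] at hR
  obtain ⟨I, hI, hRI⟩ := hR
  exact ⟨I, hI, generate_le_iff.mpr hRI⟩

theorem sSup_generate_image (I : SuperEqLat α) : sSup (generate '' I.1) = I := by
  refine le_antisymm (sSup_le ?_) fun R hR => ?_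
  · rintro _ ⟨R, hR, rfl⟩
    exact generate_le_iff.mpr hR
  · exact le_sSup (mem_image_of_mem generate hR) (mem_generate R)

end SuperEqLat

/-- The complete lattice of superequivalences on a set is algebraic, i.e.,
compactly generated. -/
theorem stmt9 (α : Type*) : IsCompactlyGenerated (SuperEqLat α) :=
  ⟨fun I => ⟨SuperEqLat.generate '' I.1,
    fun _ ⟨R, _, hJ⟩ => hJ ▸ SuperEqLat.isCompactElement_generate R,
    SuperEqLat.sSup_generate_image I⟩⟩
end

section
/- Let A be an algebra with a Mal'tsev term p (a ternary term with p(x,x,y) = y and p(x,y,y) = x). Then any two compatible superequivalences on A permute: ℐ ∘ ℐ' = ℐ' ∘ ℐ. -/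
open Set

variable {α : Type*}

variable {A : Type*} {ι : Type*} {ar : ι → ℕ}

/-- Terms over a signature (operation symbols `ι` with arities `ar`) in `n` variables. -/
inductive Term (ι : Type*) (ar : ι → ℕ) (n : ℕ) : Type _ where
  | var : Fin n → Term ι ar n
  | app : (i : ι) → (Fin (ar i) → Term ι ar n) → Term ι ar n

/-- Evaluation of a term in an algebra `A` with operations `ops`. -/
def Term.eval {A : Type*} {ι : Type*} {ar : ι → ℕ} {n : ℕ}
    (ops : ∀ i, (Fin (ar i) → A) → A) (v : Fin n → A) : Term ι ar n → A
  | Term.var k => v k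
  | Term.app i ts => ops i fun j => Term.eval ops v (ts j)

/-- Componentwise image of a tuple of relations under an `n`-ary operation. -/
def opImg {A : Type*} {n : ℕ} (w : (Fin n → A) → A) (R : Fin n → Set (A × A)) :
    Set (A × A) :=
  {p | ∃ a b : Fin n → A, (∀ k, (a k, b k) ∈ R k) ∧ p = (w a, w b)}

/-- A set (ideal) of relations on the algebra `A` is compatible if it is closed
under componentwise images of the basic operations. -/
def seCompatible (ops : ∀ i, (Fin (ar i) → A) → A) (ℐ : Set (Set (A × A))) : Prop :=
  ∀ i, ∀ R : Fin (ar i) → Set (A × A), (∀ k, R k ∈ ℐ) → opImg (ops i) R ∈ ℐ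

/-!
Given `x R y S z`, the Mal'tsev term splits the path the other way round:
`x = t(x, y, y)` is related to `t(x, y, z)` through `t(id, id, S)`, and `t(x, y, z)` to
`t(y, y, z) = z` through `t(R, id, id)`. Both image relations lie in the respective
superequivalences by compatibility, since each contains the diagonal.
-/

theorem opImg_eval_mem (ops : ∀ i, (Fin (ar i) → A) → A) {ℐ : Set (Set (A × A))}
    (hI : IsIdeal ℐ) (hIc : seCompatible ops ℐ) {n : ℕ} (t : Term ι ar n)
    (R : Fin n → Set (A × A)) (hR : ∀ k, R k ∈ ℐ) :
    opImg (fun v => t.eval ops v) R ∈ ℐ := by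
  induction t with
  | var k =>
    refine hI.2.1 (R k) (hR k) _ ?_
    rintro _ ⟨a, b, hab, rfl⟩
    exact hab k
  | app i ts ih =>
    refine hI.2.1 _ (hIc i (fun j => opImg (fun v => (ts j).eval ops v) R) ih) _ ?_
    rintro _ ⟨a, b, hab, rfl⟩
    exact ⟨fun j => (ts j).eval ops a, fun j => (ts j).eval ops b,
      fun j => ⟨a, b, hab, rfl⟩, rfl⟩

theorem comp_subset_comp_opImg_of_malcev (m : (Fin 3 → A) → A)
    (hm1 : ∀ x y, m ![x, x, y] = y) (hm2 : ∀ x y, m ![x, y, y] = x) (R S : Set (A × A)) :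
    SetRel.comp R S ⊆
      SetRel.comp (opImg m ![SetRel.id, SetRel.id, S]) (opImg m ![R, SetRel.id, SetRel.id]) := by
  rintro ⟨x, z⟩ ⟨y, hxy, hyz⟩
  refine ⟨m ![x, y, z], ⟨![x, y, y], ![x, y, z], ?_, by rw [hm2]⟩,
    ⟨![x, y, z], ![y, y, z], ?_, by rw [hm1]⟩⟩
  · intro k
    fin_cases k
    exacts [rfl, rfl, hyz]
  · intro k
    fin_cases k
    exacts [hxy, rfl, rfl]

theorem idealComp_subset_of_malcev (ops : ∀ i, (Fin (ar i) → A) → A) (t : Term ι ar 3)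
    (ht1 : ∀ x y : A, t.eval ops ![x, x, y] = y)
    (ht2 : ∀ x y : A, t.eval ops ![x, y, y] = x)
    {ℐ 𝒥 : Set (Set (A × A))}
    (hI : IsSuperEq ℐ) (hIc : seCompatible ops ℐ)
    (hJ : IsSuperEq 𝒥) (hJc : seCompatible ops 𝒥) :
    idealComp ℐ 𝒥 ⊆ idealComp 𝒥 ℐ := by
  rintro T ⟨R, hR, S, hS, hT⟩
  have hS' : ∀ k, ![SetRel.id, SetRel.id, S] k ∈ 𝒥 := by
    intro k
    fin_cases k
    exacts [hJ.2.1, hJ.2.1, hS]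
  have hR' : ∀ k, ![R, SetRel.id, SetRel.id] k ∈ ℐ := by
    intro k
    fin_cases k
    exacts [hR, hI.2.1, hI.2.1]
  exact ⟨_, opImg_eval_mem ops hJ.1 hJc t _ hS', _, opImg_eval_mem ops hI.1 hIc t _ hR',
    hT.trans (comp_subset_comp_opImg_of_malcev _ ht1 ht2 R S)⟩

theorem stmt10 (ops : ∀ i, (Fin (ar i) → A) → A) (t : Term ι ar 3)
    (ht1 : ∀ x y : A, t.eval ops ![x, x, y] = y)
    (ht2 : ∀ x y : A, t.eval ops ![x, y, y] = x)
    (ℐ 𝒥 : Set (Set (A × A)))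
    (hI : IsSuperEq ℐ) (hIc : seCompatible ops ℐ)
    (hJ : IsSuperEq 𝒥) (hJc : seCompatible ops 𝒥) :
    idealComp ℐ 𝒥 = idealComp 𝒥 ℐ :=
  (idealComp_subset_of_malcev ops t ht1 ht2 hI hIc hJ hJc).antisymm
    (idealComp_subset_of_malcev ops t ht1 ht2 hJ hJc hI hIc)
end
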